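/- arXiv:1310.4571 — 8 statements merged into one kernel-verified Lean document; each statement's English description precedes it below -/
import Mathlib

section
/- Let P be a finite set of ports and let γ₁, γ₂ be two sets of interactions over act(P) ∪ fire(P) ∪ inhib(P) such that every interaction in their symmetric difference (γ₁ \ γ₂) ∪ (γ₂ \ γ₁) has empty firing support. Then for every finite family of behaviours B₁,…,Bₙ with pairwise disjoint port sets whose union is P, the composed behaviours coincide: γ₁(B₁,…,Bₙ) = γ₂(B₁,…,Bₙ). -/
/-! An interaction with empty firing support can only fire the empty label, and then every
component stays put, so it contributes only the idle self-loops that every composition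
already has. -/

/-- Typed ports: activation, firing and negative copies of the port set `P`. -/
inductive TPort (P : Type) : Type
  | act : P → TPort P
  | fire : P → TPort P
  | inhib : P → TPort P

/-- Firing support of an interaction. -/
def firesup {P : Type} (a : Set (TPort P)) : Set P := {p | TPort.fire p ∈ a}

/-- Activation support of an interaction. -/
def actsup {P : Type} (a : Set (TPort P)) : Set P := {p | TPort.act p ∈ a}

/-- Negative support of an interaction. -/
def negsup {P : Type} (a : Set (TPort P)) : Set P := {p | TPort.inhib p ∈ a}

/-- A behaviour: an LTS with an offer predicate; the transitions labelled by the
empty interaction are exactly the self-loops, and every port occurring on a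
transition from a state is offered in that state. -/
structure Behaviour (P : Type) : Type 1 where
  State : Type
  ports : Set P
  tr : State → Set P → State → Prop
  off : State → P → Prop
  tr_sub : ∀ {q a q'}, tr q a q' → a ⊆ ports
  tr_empty : ∀ q q', tr q ∅ q' ↔ q' = q
  off_of_tr : ∀ {q a q' p}, tr q a q' → p ∈ a → off q p

/-- Transition relation of the composition `γ(B₁,…,Bₙ)` (including the empty
self-loops, present in every behaviour by the standing assumption). -/
def compTr {P ι : Type} (B : ι → Behaviour P) (γ : Set (Set (TPort P)))
    (q : ∀ i, (B i).State) (b : Set P) (q' : ∀ i, (B i).State) : Prop :=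
  (b = ∅ ∧ q' = q) ∨
  ∃ a ∈ γ, b = firesup a ∧ ∀ i,
    (B i).tr (q i) (firesup a ∩ (B i).ports) (q' i) ∧
    (∀ p ∈ actsup a ∩ (B i).ports, (B i).off (q i) p) ∧
    (∀ p ∈ negsup a ∩ (B i).ports, ¬ (B i).off (q i) p)

/-- Offer predicate of the composition `γ(B₁,…,Bₙ)`. -/
def compOff {P ι : Type} (B : ι → Behaviour P)
    (q : ∀ i, (B i).State) (p : P) : Prop :=
  ∃ i, p ∈ (B i).ports ∧ (B i).off (q i) p

/-- Two sets of interactions are equivalent iff they induce the same composed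
behaviour on every finite family of behaviours whose port sets partition `P`. -/
def EquivInter (P : Type) (γ₁ γ₂ : Set (Set (TPort P))) : Prop :=
  ∀ (ι : Type) [Finite ι] (B : ι → Behaviour P),
    Pairwise (fun i j => Disjoint (B i).ports (B j).ports) →
    (⋃ i, (B i).ports) = Set.univ →
    compTr B γ₁ = compTr B γ₂

theorem compTr_le_of_firesup_eq_empty {P ι : Type} (B : ι → Behaviour P)
    {γ γ' : Set (Set (TPort P))} (h : ∀ a ∈ γ \ γ', firesup a = ∅) :
    compTr B γ ≤ compTr B γ' := by
  rintro q b q' (idle | ⟨a, ha, rfl, hcomp⟩)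
  · exact Or.inl idle
  by_cases ha' : a ∈ γ'
  · exact Or.inr ⟨a, ha', rfl, hcomp⟩
  have hfire : firesup a = ∅ := h a ⟨ha, ha'⟩
  refine Or.inl ⟨hfire, funext fun i => ((B i).tr_empty _ _).1 ?_⟩
  simpa only [hfire, Set.empty_inter] using (hcomp i).1

theorem stmt0_general {P : Type} (γ₁ γ₂ : Set (Set (TPort P)))
    (h : ∀ a ∈ (γ₁ \ γ₂) ∪ (γ₂ \ γ₁), firesup a = ∅) :
    ∀ (ι : Type) [Finite ι] (B : ι → Behaviour P),
      Pairwise (fun i j => Disjoint (B i).ports (B j).ports) →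
      (⋃ i, (B i).ports) = Set.univ →
      compTr B γ₁ = compTr B γ₂ := fun _ _ B _ _ =>
  le_antisymm (compTr_le_of_firesup_eq_empty B fun a ha => h a (Or.inl ha))
    (compTr_le_of_firesup_eq_empty B fun a ha => h a (Or.inr ha))

/-- If every interaction in the symmetric difference of `γ₁`
and `γ₂` has empty firing support, then `γ₁` and `γ₂` induce the same
composition on every finite family of behaviours with pairwise disjoint port
sets whose union is `P`. -/
theorem stmt0 {P : Type} [Finite P] (γ₁ γ₂ : Set (Set (TPort P)))
    (h : ∀ a ∈ (γ₁ \ γ₂) ∪ (γ₂ \ γ₁), firesup a = ∅) :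
    ∀ (ι : Type) [Finite ι] (B : ι → Behaviour P),
      Pairwise (fun i j => Disjoint (B i).ports (B j).ports) →
      (⋃ i, (B i).ports) = Set.univ →
      compTr B γ₁ = compTr B γ₂ :=
  stmt0_general γ₁ γ₂ h
end

section
/- Let γ₁ be a set of interactions over act(P) ∪ fire(P) ∪ inhib(P) and let a be an interaction such that there exists b ∈ γ₁ with b ⊆ a and firesup(b) = firesup(a). Then for every finite family of behaviours B₁,…,Bₙ with pairwise disjoint port sets whose union is P, (γ₁ ∪ {a})(B₁,…,Bₙ) = γ₁(B₁,…,Bₙ). -/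
lemma actsup_mono {P : Type} {a b : Set (TPort P)} (h : b ⊆ a) : actsup b ⊆ actsup a :=
  fun _ hp => h hp

lemma negsup_mono {P : Type} {a b : Set (TPort P)} (h : b ⊆ a) : negsup b ⊆ negsup a :=
  fun _ hp => h hp

section compTr

variable {P ι : Type} (B : ι → Behaviour P)

lemma compTr_mono {γ γ' : Set (Set (TPort P))} (h : γ ⊆ γ') : compTr B γ ≤ compTr B γ' := by
  rintro q c q' (hidle | ⟨x, hx, hc, hstep⟩)
  · exact Or.inl hidle
  · exact Or.inr ⟨x, h hx, hc, hstep⟩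

/-- `b` fires the same ports as `a`, under weaker activation and negative guards. -/
lemma compTr_union_singleton_le {γ : Set (Set (TPort P))} {a b : Set (TPort P)} (hb : b ∈ γ)
    (hba : b ⊆ a) (hfs : firesup b = firesup a) : compTr B (γ ∪ {a}) ≤ compTr B γ := by
  rintro q c q' (hidle | ⟨x, hx | rfl, hc, hstep⟩)
  · exact Or.inl hidle
  · exact Or.inr ⟨x, hx, hc, hstep⟩
  · refine Or.inr ⟨b, hb, hfs ▸ hc, fun i => ?_⟩
    obtain ⟨htr, hact, hneg⟩ := hstep i
    exact ⟨hfs ▸ htr, fun p hp => hact p ⟨actsup_mono hba hp.1, hp.2⟩,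
      fun p hp => hneg p ⟨negsup_mono hba hp.1, hp.2⟩⟩

lemma compTr_union_singleton {γ : Set (Set (TPort P))} {a b : Set (TPort P)} (hb : b ∈ γ)
    (hba : b ⊆ a) (hfs : firesup b = firesup a) : compTr B (γ ∪ {a}) = compTr B γ :=
  le_antisymm (compTr_union_singleton_le B hb hba hfs) (compTr_mono B Set.subset_union_left)

end compTr

/-- If `b ∈ γ₁`, `b ⊆ a` and `firesup b = firesup a`, then
adding `a` to `γ₁` does not change the composed behaviour, for any finite
family of behaviours with pairwise disjoint port sets whose union is `P`. -/
theorem stmt1 {P : Type} (γ₁ : Set (Set (TPort P))) (a : Set (TPort P))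
    (hex : ∃ b ∈ γ₁, b ⊆ a ∧ firesup b = firesup a) :
    ∀ (ι : Type) [Finite ι] (B : ι → Behaviour P),
      Pairwise (fun i j => Disjoint (B i).ports (B j).ports) →
      (⋃ i, (B i).ports) = Set.univ →
      compTr B (γ₁ ∪ {a}) = compTr B γ₁ := by
  obtain ⟨b, hb, hba, hfs⟩ := hex
  intro ι _ B _ _
  exact compTr_union_singleton B hb hba hfs
end

section
/- The equivalence relation ∼ on causal interaction trees over act(P) ∪ fire(P) ∪ inhib(P) is a congruence with respect to the tree constructors: if t₁ ∼ t₂, then for every interaction a and every tree s, a → t₁ ∼ a → t₂, t₁ ⊕ s ∼ t₂ ⊕ s and s ⊕ t₁ ∼ s ⊕ t₂; consequently, for every tree context C(z), C(t₁/z) ∼ C(t₂/z), where C(tᵢ/z) is obtained by replacing all occurrences of the variable z in C by tᵢ. -/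
/-- Causal interaction trees over the typed ports of `P`
(`zero` is the constant 0; the constant 1 is the empty interaction `∅`). -/
inductive CITree (P : Type) : Type
  | zero : CITree P
  | node : Set (TPort P) → CITree P
  | arrow : Set (TPort P) → CITree P → CITree P
  | par : CITree P → CITree P → CITree P

/-- Interaction semantics of causal interaction trees. -/
def sem {P : Type} : CITree P → Set (Set (TPort P))
  | CITree.zero => ∅
  | CITree.node a => {a}
  | CITree.arrow a t => {a} ∪ {c | ∃ b ∈ sem t, c = a ∪ b}
  | CITree.par t₁ t₂ =>
      sem t₁ ∪ sem t₂ ∪ {c | ∃ b₁ ∈ sem t₁, ∃ b₂ ∈ sem t₂, c = b₁ ∪ b₂}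

/-- Equivalence of causal interaction trees. -/
def treeEquiv {P : Type} (t₁ t₂ : CITree P) : Prop :=
  EquivInter P (sem t₁) (sem t₂)

/-- Causal interaction tree contexts (with a hole `z`, possibly occurring
several times or not at all). -/
inductive CICtx (P : Type) : Type
  | hole : CICtx P
  | zero : CICtx P
  | node : Set (TPort P) → CICtx P
  | arrow : Set (TPort P) → CICtx P → CICtx P
  | par : CICtx P → CICtx P → CICtx P

/-- Substitution of a tree for all occurrences of the hole of a context. -/
def substC {P : Type} : CICtx P → CITree P → CITree P
  | CICtx.hole, t => t
  | CICtx.zero, _ => CITree.zero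
  | CICtx.node a, _ => CITree.node a
  | CICtx.arrow a C, t => CITree.arrow a (substC C t)
  | CICtx.par C₁ C₂, t => CITree.par (substC C₁ t) (substC C₂ t)

/-!
Equivalence of interaction sets is preserved by arbitrary unions, since a step of a union is a
step of one of its parts, and by prefixing `γ ↦ a → γ`. For the latter, a step of `a → γ` on a
family `B` is either a step of `a` alone (this absorbs continuations that fire nothing) or `a`
glued to a nonempty step of `γ` on the single behaviour `guardedProduct B a`, to which the
equivalence of `γ₁` and `γ₂` applies. As `sem (a → t) = a → sem t` and
`sem (s ⊕ t) = sem t ∪ ⋃ b ∈ sem s, (b → sem t)`, the constructors respect `∼`, and contexts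
follow by induction.
-/

open Set

variable {P ι : Type}

@[simp] lemma firesup_union (a b : Set (TPort P)) : firesup (a ∪ b) = firesup a ∪ firesup b := rfl

@[simp] lemma actsup_union (a b : Set (TPort P)) : actsup (a ∪ b) = actsup a ∪ actsup b := rfl

@[simp] lemma negsup_union (a b : Set (TPort P)) : negsup (a ∪ b) = negsup a ∪ negsup b := rfl

@[simp] lemma firesup_image_fire (c : Set P) : firesup (TPort.fire '' c) = c := by
  ext; simp [firesup]

@[simp] lemma actsup_image_fire (c : Set P) : actsup (TPort.fire '' c) = ∅ := by
  ext; simp [actsup]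

@[simp] lemma negsup_image_fire (c : Set P) : negsup (TPort.fire '' c) = ∅ := by
  ext; simp [negsup]

def Fires (B : ι → Behaviour P) (a : Set (TPort P)) (q q' : ∀ i, (B i).State) : Prop :=
  ∀ i, (B i).tr (q i) (firesup a ∩ (B i).ports) (q' i) ∧
    (∀ p ∈ actsup a ∩ (B i).ports, (B i).off (q i) p) ∧
    (∀ p ∈ negsup a ∩ (B i).ports, ¬ (B i).off (q i) p)

lemma compTr_iff {B : ι → Behaviour P} {γ : Set (Set (TPort P))} {q q' : ∀ i, (B i).State}
    {b : Set P} :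
    compTr B γ q b q' ↔ (b = ∅ ∧ q' = q) ∨ ∃ a ∈ γ, b = firesup a ∧ Fires B a q q' :=
  Iff.rfl

lemma Fires.of_union_of_firesup_eq_empty {B : ι → Behaviour P} {a b : Set (TPort P)}
    {q q' : ∀ i, (B i).State} (hab : Fires B (a ∪ b) q q') (hb : firesup b = ∅) :
    Fires B a q q' := by
  intro i
  obtain ⟨htr, hact, hneg⟩ := hab i
  refine ⟨?_, fun p hp => hact p ⟨Or.inl hp.1, hp.2⟩, fun p hp => hneg p ⟨Or.inl hp.1, hp.2⟩⟩
  simpa [hb] using htr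

lemma eq_of_mem_ports {B : ι → Behaviour P}
    (hd : Pairwise fun i j => Disjoint (B i).ports (B j).ports)
    {i j : ι} {p : P} (hi : p ∈ (B i).ports) (hj : p ∈ (B j).ports) : i = j :=
  of_not_not fun hij => Set.disjoint_left.mp (hd hij) hi hj

lemma compTr_iUnion {B : ι → Behaviour P} {q q' : ∀ i, (B i).State} {b : Set P} {κ : Sort*}
    (γ : κ → Set (Set (TPort P))) :
    compTr B (⋃ k, γ k) q b q' ↔ (b = ∅ ∧ q' = q) ∨ ∃ k, compTr B (γ k) q b q' := by
  simp only [compTr_iff, mem_iUnion]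
  constructor
  · rintro (hidle | ⟨a, ⟨k, ha⟩, hb, hf⟩)
    · exact Or.inl hidle
    · exact Or.inr ⟨k, Or.inr ⟨a, ha, hb, hf⟩⟩
  · rintro (hidle | ⟨k, hidle | ⟨a, ha, hb, hf⟩⟩)
    · exact Or.inl hidle
    · exact Or.inl hidle
    · exact Or.inr ⟨a, ⟨k, ha⟩, hb, hf⟩

namespace EquivInter

variable {γ₁ γ₂ γ₃ : Set (Set (TPort P))}

lemma refl (γ : Set (Set (TPort P))) : EquivInter P γ γ :=
  fun _ _ _ _ _ => rfl

lemma trans (h₁₂ : EquivInter P γ₁ γ₂) (h₂₃ : EquivInter P γ₂ γ₃) : EquivInter P γ₁ γ₃ :=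
  fun ι _ B hd hc => (h₁₂ ι B hd hc).trans (h₂₃ ι B hd hc)

lemma iUnion {κ : Sort*} {γ δ : κ → Set (Set (TPort P))} (h : ∀ k, EquivInter P (γ k) (δ k)) :
    EquivInter P (⋃ k, γ k) (⋃ k, δ k) := by
  intro ι _ B hd hc
  funext q b q'
  have hk := fun k => h k ι B hd hc
  simp only [compTr_iUnion, hk]

lemma union {δ₁ δ₂ : Set (Set (TPort P))} (hγ : EquivInter P γ₁ γ₂) (hδ : EquivInter P δ₁ δ₂) :
    EquivInter P (γ₁ ∪ δ₁) (γ₂ ∪ δ₂) := by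
  rw [union_eq_iUnion, union_eq_iUnion]
  exact iUnion fun k => Bool.rec hδ hγ k

end EquivInter

section GuardedProduct

variable {B : ι → Behaviour P}

/-- The synchronous product of `B` as a single behaviour, in which every nonempty step `c` is
performed together with the firing ports of `a` and only where the guards of `a` hold. -/
def guardedProduct (B : ι → Behaviour P) (a : Set (TPort P))
    (hc : (⋃ i, (B i).ports) = univ) : Behaviour P where
  State := ∀ i, (B i).State
  ports := univ
  tr q c q' := (c = ∅ ∧ q' = q) ∨ (c ≠ ∅ ∧ Fires B (a ∪ TPort.fire '' c) q q')
  off q p := ∃ i, p ∈ (B i).ports ∧ (B i).off (q i) p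
  tr_sub _ := subset_univ _
  tr_empty q q' := by simp
  off_of_tr := by
    rintro q c q' p (⟨rfl, -⟩ | ⟨-, hf⟩) hp
    · exact absurd hp (notMem_empty p)
    · obtain ⟨i, hi⟩ := mem_iUnion.mp (hc ▸ mem_univ p : p ∈ ⋃ i, (B i).ports)
      exact ⟨i, hi, (B i).off_of_tr (hf i).1 ⟨by simp [hp], hi⟩⟩

variable (hc : (⋃ i, (B i).ports) = univ) {a b : Set (TPort P)} {q q' : ∀ i, (B i).State}

lemma fires_guardedProduct_iff (hd : Pairwise fun i j => Disjoint (B i).ports (B j).ports)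
    (hb : firesup b ≠ ∅) :
    Fires (fun _ : Unit => guardedProduct B a hc) b (fun _ => q) (fun _ => q') ↔
      Fires B (a ∪ b) q q' := by
  simp only [Fires, guardedProduct, inter_univ, forall_const, hb, false_and, ne_eq,
    not_false_eq_true, true_and, false_or, firesup_union, actsup_union, negsup_union,
    firesup_image_fire, actsup_image_fire, negsup_image_fire, union_empty]
  constructor
  · rintro ⟨hf, hact, hneg⟩ i
    obtain ⟨htr, hact_a, hneg_a⟩ := hf i
    refine ⟨htr, ?_, ?_⟩
    · rintro p ⟨hpa | hpb, hpi⟩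
      · exact hact_a p ⟨hpa, hpi⟩
      · obtain ⟨j, hpj, hoff⟩ := hact p hpb
        obtain rfl := eq_of_mem_ports hd hpj hpi
        exact hoff
    · rintro p ⟨hpa | hpb, hpi⟩ hoff
      · exact hneg_a p ⟨hpa, hpi⟩ hoff
      · exact hneg p hpb ⟨i, hpi, hoff⟩
  · intro hf
    refine ⟨fun i => ?_, fun p hp => ?_, fun p hp => ?_⟩
    · obtain ⟨htr, hact, hneg⟩ := hf i
      exact ⟨htr, fun p hp => hact p ⟨Or.inl hp.1, hp.2⟩, fun p hp => hneg p ⟨Or.inl hp.1, hp.2⟩⟩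
    · obtain ⟨i, hpi⟩ := mem_iUnion.mp (hc ▸ mem_univ p : p ∈ ⋃ i, (B i).ports)
      exact ⟨i, hpi, (hf i).2.1 p ⟨Or.inr hp, hpi⟩⟩
    · rintro ⟨i, hpi, hoff⟩
      exact (hf i).2.2 p ⟨Or.inr hp, hpi⟩ hoff

lemma compTr_guardedProduct_iff (hd : Pairwise fun i j => Disjoint (B i).ports (B j).ports)
    {γ : Set (Set (TPort P))} {c : Set P} (hcne : c ≠ ∅) :
    compTr (fun _ : Unit => guardedProduct B a hc) γ (fun _ => q) c (fun _ => q') ↔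
      ∃ b ∈ γ, c = firesup b ∧ Fires B (a ∪ b) q q' := by
  constructor
  · rintro (⟨rfl, -⟩ | ⟨b, hb, rfl, hf⟩)
    · exact absurd rfl hcne
    · exact ⟨b, hb, rfl, (fires_guardedProduct_iff hc hd hcne).mp hf⟩
  · rintro ⟨b, hb, rfl, hf⟩
    exact Or.inr ⟨b, hb, rfl, (fires_guardedProduct_iff hc hd hcne).mpr hf⟩

end GuardedProduct

def arrowInter (a : Set (TPort P)) (γ : Set (Set (TPort P))) : Set (Set (TPort P)) :=
  insert a ((a ∪ ·) '' γ)

lemma compTr_arrowInter {B : ι → Behaviour P}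
    (hd : Pairwise fun i j => Disjoint (B i).ports (B j).ports) (hc : (⋃ i, (B i).ports) = univ)
    {a : Set (TPort P)} {γ : Set (Set (TPort P))} {q q' : ∀ i, (B i).State} {d : Set P} :
    compTr B (arrowInter a γ) q d q' ↔ compTr B {a} q d q' ∨
      ∃ c ≠ ∅, d = firesup a ∪ c ∧
        compTr (fun _ : Unit => guardedProduct B a hc) γ (fun _ => q) c (fun _ => q') := by
  constructor
  · rintro (hidle | ⟨e, rfl | ⟨b, hb, rfl⟩, hlabel, hf⟩)
    · exact Or.inl (Or.inl hidle)
    · exact Or.inl (Or.inr ⟨e, rfl, hlabel, hf⟩)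
    · by_cases hfb : firesup b = ∅
      · exact Or.inl (Or.inr ⟨a, rfl, by simp [hlabel, hfb],
          Fires.of_union_of_firesup_eq_empty hf hfb⟩)
      · exact Or.inr ⟨firesup b, hfb, hlabel,
          (compTr_guardedProduct_iff hc hd hfb).mpr ⟨b, hb, rfl, hf⟩⟩
  · rintro ((hidle | ⟨e, rfl, hlabel, hf⟩) | ⟨c, hcne, rfl, hG⟩)
    · exact Or.inl hidle
    · exact Or.inr ⟨e, mem_insert e _, hlabel, hf⟩
    · obtain ⟨b, hb, rfl, hf⟩ := (compTr_guardedProduct_iff hc hd hcne).mp hG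
      exact Or.inr ⟨a ∪ b, mem_insert_of_mem _ (mem_image_of_mem _ hb), rfl, hf⟩

lemma EquivInter.arrowInter {γ₁ γ₂ : Set (Set (TPort P))} (h : EquivInter P γ₁ γ₂)
    (a : Set (TPort P)) : EquivInter P (arrowInter a γ₁) (arrowInter a γ₂) := by
  intro ι _ B hd hc
  have hG := h Unit (fun _ => guardedProduct B a hc) Subsingleton.pairwise (iUnion_const _)
  funext q d q'
  rw [propext (compTr_arrowInter hd hc), propext (compTr_arrowInter hd hc), hG]

lemma sem_arrow (a : Set (TPort P)) (t : CITree P) :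
    sem (CITree.arrow a t) = arrowInter a (sem t) := by
  ext c
  simp [sem, arrowInter, eq_comm]

lemma sem_par_comm (s t : CITree P) : sem (CITree.par s t) = sem (CITree.par t s) := by
  ext c
  simp only [sem, mem_union, mem_ofPred_eq]
  constructor <;>
  · rintro ((h | h) | ⟨b₁, h₁, b₂, h₂, rfl⟩)
    exacts [Or.inl (Or.inr h), Or.inl (Or.inl h), Or.inr ⟨b₂, h₂, b₁, h₁, union_comm _ _⟩]

lemma sem_par (s t : CITree P) :
    sem (CITree.par s t) = sem t ∪ ⋃ b ∈ sem s, arrowInter b (sem t) := by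
  ext c
  simp only [sem, arrowInter, mem_union, mem_ofPred_eq, mem_iUnion, mem_insert_iff, mem_image]
  constructor
  · rintro ((h | h) | ⟨b₁, h₁, b₂, h₂, rfl⟩)
    exacts [Or.inr ⟨c, h, Or.inl rfl⟩, Or.inl h, Or.inr ⟨b₁, h₁, Or.inr ⟨b₂, h₂, rfl⟩⟩]
  · rintro (h | ⟨b, hb, rfl | ⟨b', hb', rfl⟩⟩)
    exacts [Or.inl (Or.inr h), Or.inl (Or.inl hb), Or.inr ⟨b, hb, b', hb', rfl⟩]

lemma treeEquiv.arrow {t₁ t₂ : CITree P} (h : treeEquiv t₁ t₂) (a : Set (TPort P)) :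
    treeEquiv (CITree.arrow a t₁) (CITree.arrow a t₂) := by
  unfold treeEquiv
  rw [sem_arrow, sem_arrow]
  exact h.arrowInter a

lemma treeEquiv.par_right {t₁ t₂ : CITree P} (h : treeEquiv t₁ t₂) (s : CITree P) :
    treeEquiv (CITree.par s t₁) (CITree.par s t₂) := by
  unfold treeEquiv
  rw [sem_par, sem_par]
  exact h.union (EquivInter.iUnion fun b => EquivInter.iUnion fun _ => h.arrowInter b)

lemma treeEquiv.par_left {t₁ t₂ : CITree P} (h : treeEquiv t₁ t₂) (s : CITree P) :
    treeEquiv (CITree.par t₁ s) (CITree.par t₂ s) := by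
  unfold treeEquiv
  rw [sem_par_comm, sem_par_comm t₂]
  exact h.par_right s

lemma treeEquiv.substC {t₁ t₂ : CITree P} (h : treeEquiv t₁ t₂) :
    ∀ C : CICtx P, treeEquiv (substC C t₁) (substC C t₂)
  | .hole => h
  | .zero | .node _ => EquivInter.refl _
  | .arrow a C => (h.substC C).arrow a
  | .par C₁ C₂ => ((h.substC C₁).par_left _).trans ((h.substC C₂).par_right _)

/-- The equivalence `∼` of causal interaction trees is a
congruence: it is preserved by the tree constructors and hence by every tree
context. -/
theorem stmt2 {P : Type} (t₁ t₂ : CITree P) (h : treeEquiv t₁ t₂) :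
    (∀ a : Set (TPort P), treeEquiv (CITree.arrow a t₁) (CITree.arrow a t₂)) ∧
    (∀ s : CITree P, treeEquiv (CITree.par t₁ s) (CITree.par t₂ s)) ∧
    (∀ s : CITree P, treeEquiv (CITree.par s t₁) (CITree.par s t₂)) ∧
    (∀ C : CICtx P, treeEquiv (substC C t₁) (substC C t₂)) :=
  ⟨h.arrow, h.par_left, h.par_right, h.substC⟩
end

section
/- Let a be an interaction over act(P) ∪ fire(P) ∪ inhib(P) with fire(p) ∈ a for some port p. Then the singleton interaction sets {a ∪ {act(p)}} and {a} are equivalent: for every finite family of behaviours B₁,…,Bₙ with pairwise disjoint port sets whose union is P, {a ∪ {act(p)}}(B₁,…,Bₙ) = {a}(B₁,…,Bₙ). (Soundness of the axiom fire(p)·act(p) = fire(p).) -/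
def Behaviour.Step {P : Type} (B : Behaviour P) (a : Set (TPort P)) (q q' : B.State) : Prop :=
  B.tr q (firesup a ∩ B.ports) q' ∧
    (∀ x ∈ actsup a ∩ B.ports, B.off q x) ∧
    (∀ x ∈ negsup a ∩ B.ports, ¬ B.off q x)

section UnionAct

variable {P : Type} (a : Set (TPort P)) (p : P)

@[simp]
theorem firesup_union_act : firesup (a ∪ {TPort.act p}) = firesup a := by
  ext x; simp [firesup]

@[simp]
theorem negsup_union_act : negsup (a ∪ {TPort.act p}) = negsup a := by
  ext x; simp [negsup]

@[simp]
theorem actsup_union_act : actsup (a ∪ {TPort.act p}) = insert p (actsup a) := by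
  ext x; simp [actsup, eq_comm]

end UnionAct

/-- A component firing `p` necessarily offers it, so additionally requiring the offer of `p`
changes nothing. -/
theorem Behaviour.step_union_act_iff {P : Type} (B : Behaviour P) {a : Set (TPort P)} {p : P}
    (hp : TPort.fire p ∈ a) {q q' : B.State} :
    B.Step (a ∪ {TPort.act p}) q q' ↔ B.Step a q q' := by
  simp only [Behaviour.Step, firesup_union_act, negsup_union_act, actsup_union_act]
  refine and_congr_right fun htr => and_congr_left fun _ => ?_
  refine ⟨fun hoff x hx => hoff x ⟨Or.inr hx.1, hx.2⟩, ?_⟩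
  rintro hoff x ⟨rfl | hx, hxB⟩
  · exact B.off_of_tr htr ⟨hp, hxB⟩
  · exact hoff x ⟨hx, hxB⟩

theorem compTr_singleton_iff {P ι : Type} (B : ι → Behaviour P) (a : Set (TPort P))
    (q : ∀ i, (B i).State) (b : Set P) (q' : ∀ i, (B i).State) :
    compTr B {a} q b q' ↔ (b = ∅ ∧ q' = q) ∨ (b = firesup a ∧ ∀ i, (B i).Step a (q i) (q' i)) := by
  simp [compTr, Behaviour.Step]

/-- If `fire p ∈ a` then the singleton interaction sets
`{a ∪ {act p}}` and `{a}` are equivalent: they induce the same composition on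
every finite family of behaviours with pairwise disjoint port sets whose union
is `P`. (Soundness of the axiom `fire(p)·act(p) = fire(p)`.) -/
theorem stmt3 {P : Type} (a : Set (TPort P)) (p : P) (hp : TPort.fire p ∈ a) :
    EquivInter P {a ∪ {TPort.act p}} {a} := by
  intro ι _ B _ _
  ext q b q'
  simp only [compTr_singleton_iff, firesup_union_act, Behaviour.step_union_act_iff _ hp]
end

section
/- Let a be an interaction over act(P) ∪ fire(P) ∪ inhib(P) containing, for some port p, either both fire(p) and inhib(p), or both act(p) and inhib(p). Then a generates no transitions: for every set of interactions γ and every finite family of behaviours B₁,…,Bₙ with pairwise disjoint port sets whose union is P, (γ ∪ {a})(B₁,…,Bₙ) = γ(B₁,…,Bₙ); in particular {a} ∼ ∅. (Soundness of the axioms fire(p)·inhib(p) = act(p)·inhib(p) = 0.) -/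
/-- The condition under which `compTr` lets the interaction `a` move `q` to `q'`. -/
def InterStep {P ι : Type} (B : ι → Behaviour P) (a : Set (TPort P))
    (q q' : ∀ i, (B i).State) : Prop :=
  ∀ i,
    (B i).tr (q i) (firesup a ∩ (B i).ports) (q' i) ∧
    (∀ p ∈ actsup a ∩ (B i).ports, (B i).off (q i) p) ∧
    (∀ p ∈ negsup a ∩ (B i).ports, ¬ (B i).off (q i) p)

theorem compTr_union_eq_of_forall_not_interStep {P ι : Type} (B : ι → Behaviour P)
    (γ δ : Set (Set (TPort P))) (hδ : ∀ a ∈ δ, ∀ q q', ¬ InterStep B a q q') :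
    compTr B (γ ∪ δ) = compTr B γ := by
  funext q b q'
  refine propext ⟨?_, ?_⟩
  · rintro (hidle | ⟨c, hγ | hδc, hb, hstep⟩)
    · exact Or.inl hidle
    · exact Or.inr ⟨c, hγ, hb, hstep⟩
    · exact (hδ c hδc q q' hstep).elim
  · rintro (hidle | ⟨c, hγ, hrest⟩)
    · exact Or.inl hidle
    · exact Or.inr ⟨c, Or.inl hγ, hrest⟩

/-- The component owning `p` would have to offer `p` (because `p` is activated, or because it
fires, which forces an offer) and at the same time not offer it (because `p` is inhibited). -/
theorem not_interStep_of_inhib_mem {P ι : Type} (B : ι → Behaviour P) (a : Set (TPort P))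
    (p : P) (hp : (TPort.fire p ∈ a ∧ TPort.inhib p ∈ a) ∨
      (TPort.act p ∈ a ∧ TPort.inhib p ∈ a))
    (i : ι) (hi : p ∈ (B i).ports) (q q' : ∀ i, (B i).State) :
    ¬ InterStep B a q q' := by
  intro hstep
  obtain ⟨htr, hact, hneg⟩ := hstep i
  rcases hp with ⟨hfire, hinhib⟩ | ⟨hactp, hinhib⟩
  · exact hneg p ⟨hinhib, hi⟩ ((B i).off_of_tr htr ⟨hfire, hi⟩)
  · exact hneg p ⟨hinhib, hi⟩ (hact p ⟨hactp, hi⟩)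

/-- An interaction containing, for some port `p`, either both
`fire p` and `inhib p`, or both `act p` and `inhib p`, generates no
transitions: adding it to any set of interactions does not change the composed
behaviour, and in particular `{a} ∼ ∅`.
(Soundness of the axioms `fire(p)·inhib(p) = act(p)·inhib(p) = 0`.) -/
theorem stmt4 {P : Type} (a : Set (TPort P)) (p : P)
    (hp : (TPort.fire p ∈ a ∧ TPort.inhib p ∈ a) ∨
          (TPort.act p ∈ a ∧ TPort.inhib p ∈ a)) :
    (∀ γ : Set (Set (TPort P)), EquivInter P (γ ∪ {a}) γ) ∧
    EquivInter P {a} ∅ := by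
  have hunion : ∀ γ : Set (Set (TPort P)), EquivInter P (γ ∪ {a}) γ := by
    intro γ ι _ B _ hcover
    obtain ⟨i, hi⟩ := Set.mem_iUnion.mp (hcover ▸ Set.mem_univ p)
    refine compTr_union_eq_of_forall_not_interStep B γ {a} ?_
    rintro c rfl
    exact not_interStep_of_inhib_mem B c p hp i hi
  refine ⟨hunion, ?_⟩
  simpa using hunion ∅
end

section
/- For every causal interaction tree t over act(P) ∪ fire(P) ∪ inhib(P), the system of causal rules R̃(t) that retains only the rules whose effect is a firing variable or tt is equivalent to the full system R(t): the set of interactions satisfying R̃(t) and the set of interactions satisfying R(t) are ∼-equivalent, i.e., they induce the same composition on every finite family of behaviours. Consequently, every causal interaction tree can be represented by a system of causal rules of the form fire(p) ⇒ C, where C is a DNF Boolean formula over fire(P) ∪ act(P) ∪ inhib(P) without negated firing variables. -/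
/-- `cSat π t v` holds iff the valuation (characteristic function of) `v`
satisfies the cause `c_π(t)` of the causal rule for the typed port `π`
(leaves `a` are treated as `a → 0`). -/
def cSat {P : Type} (π : TPort P) : CITree P → Set (TPort P) → Prop
  | CITree.zero, _ => False
  | CITree.node b, v => π ∈ b ∧ b \ {π} ⊆ v
  | CITree.arrow b t, v =>
      (π ∈ b ∧ b \ {π} ⊆ v) ∨ (π ∉ b ∧ b ⊆ v ∧ cSat π t v)
  | CITree.par t₁ t₂, v => cSat π t₁ v ∨ cSat π t₂ v

/-- `cSatTT t v` holds iff the valuation `v` satisfies the cause `c_tt(t)` of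
the causal rule for `tt`. -/
def cSatTT {P : Type} : CITree P → Set (TPort P) → Prop
  | CITree.zero, _ => False
  | CITree.node b, v => b ⊆ v
  | CITree.arrow b _, v => b ⊆ v
  | CITree.par t₁ t₂, v => cSatTT t₁ v ∨ cSatTT t₂ v

/-- An interaction satisfies the full system `R(t)` (rules for all typed ports
and `tt`). -/
def satFull {P : Type} (t : CITree P) (a : Set (TPort P)) : Prop :=
  cSatTT t a ∧ ∀ π ∈ a, cSat π t a

/-- An interaction satisfies the reduced system `R̃(t)` (only the rules whose
effect is a firing variable or `tt`). -/
def satFire {P : Type} (t : CITree P) (a : Set (TPort P)) : Prop :=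
  cSatTT t a ∧ ∀ p : P, TPort.fire p ∈ a → cSat (TPort.fire p) t a

/-! `c_tt(t)` holds at `a` iff some interaction of `t` lies inside `a`, and for `π ∈ a`,
`c_π(t)` holds at `a` iff some interaction of `t` inside `a` contains `π`. So if `a` satisfies
`R̃(t)`, the union of the interactions of `t` inside `a` satisfies `R(t)` and has the same firing
support as `a`; being smaller, it requires fewer ports to be offered or refused, so the
composition can fire it wherever it can fire `a`. -/

section Composition

variable {P ι : Type}

theorem compTr_eq_of_forall_exists_subset {γ₁ γ₂ : Set (Set (TPort P))} (h₂₁ : γ₂ ⊆ γ₁)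
    (h₁₂ : ∀ a ∈ γ₁, ∃ a' ∈ γ₂, a' ⊆ a ∧ firesup a' = firesup a) (B : ι → Behaviour P) :
    compTr B γ₁ = compTr B γ₂ := by
  funext q b q'
  apply propext
  constructor
  · rintro (hidle | ⟨a, ha, rfl, hloc⟩)
    · exact Or.inl hidle
    · obtain ⟨a', ha', hsub, hfire⟩ := h₁₂ a ha
      refine Or.inr ⟨a', ha', hfire.symm, fun i => ⟨hfire ▸ (hloc i).1, ?_, ?_⟩⟩
      · exact fun p hp => (hloc i).2.1 p ⟨hsub hp.1, hp.2⟩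
      · exact fun p hp => (hloc i).2.2 p ⟨hsub hp.1, hp.2⟩
  · rintro (hidle | ⟨a, ha, hb, hloc⟩)
    exacts [Or.inl hidle, Or.inr ⟨a, h₂₁ ha, hb, hloc⟩]

end Composition

section Causes

variable {P : Type} {t : CITree P} {a : Set (TPort P)}

theorem cSatTT_iff : cSatTT t a ↔ ∃ c ∈ sem t, c ⊆ a := by
  induction t with
  | zero => simp [cSatTT, sem]
  | node b => simp [cSatTT, sem]
  | arrow b s _ =>
    refine ⟨fun h => ⟨b, Or.inl rfl, h⟩, ?_⟩
    rintro ⟨c, rfl | ⟨c', -, rfl⟩, hca⟩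
    exacts [hca, Set.subset_union_left.trans hca]
  | par t₁ t₂ ih₁ ih₂ =>
    simp only [cSatTT, ih₁, ih₂]
    constructor
    · rintro (⟨c, hc, hca⟩ | ⟨c, hc, hca⟩)
      exacts [⟨c, Or.inl (Or.inl hc), hca⟩, ⟨c, Or.inl (Or.inr hc), hca⟩]
    · rintro ⟨c, (hc | hc) | ⟨c₁, h₁, c₂, -, rfl⟩, hca⟩
      exacts [Or.inl ⟨c, hc, hca⟩, Or.inr ⟨c, hc, hca⟩,
        Or.inl ⟨c₁, h₁, Set.subset_union_left.trans hca⟩]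

theorem cSat_iff {π : TPort P} (hπ : π ∈ a) :
    cSat π t a ↔ ∃ c ∈ sem t, c ⊆ a ∧ π ∈ c := by
  have diff_subset_iff (b : Set (TPort P)) : b \ {π} ⊆ a ↔ b ⊆ a := by
    rw [Set.sdiff_singleton_subset_iff, Set.insert_eq_of_mem hπ]
  induction t with
  | zero => simp [cSat, sem]
  | node b => simp [cSat, sem, diff_subset_iff, and_comm]
  | arrow b s ih =>
    constructor
    · rintro (⟨hπb, hba⟩ | ⟨-, hba, hs⟩)
      · exact ⟨b, Or.inl rfl, (diff_subset_iff b).1 hba, hπb⟩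
      · obtain ⟨c, hc, hca, hπc⟩ := ih.1 hs
        exact ⟨b ∪ c, Or.inr ⟨c, hc, rfl⟩, Set.union_subset hba hca, Or.inr hπc⟩
    · rintro ⟨c, rfl | ⟨c, hc, rfl⟩, hca, hπc⟩
      · exact Or.inl ⟨hπc, (diff_subset_iff c).2 hca⟩
      · by_cases hπb : π ∈ b
        · exact Or.inl ⟨hπb, (diff_subset_iff b).2 (Set.subset_union_left.trans hca)⟩
        · exact Or.inr ⟨hπb, Set.subset_union_left.trans hca,
            ih.2 ⟨c, hc, Set.subset_union_right.trans hca, hπc.resolve_left hπb⟩⟩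
  | par t₁ t₂ ih₁ ih₂ =>
    simp only [cSat, ih₁, ih₂]
    constructor
    · rintro (⟨c, hc, hca, hπc⟩ | ⟨c, hc, hca, hπc⟩)
      exacts [⟨c, Or.inl (Or.inl hc), hca, hπc⟩, ⟨c, Or.inl (Or.inr hc), hca, hπc⟩]
    · rintro ⟨c, (hc | hc) | ⟨c₁, h₁, c₂, h₂, rfl⟩, hca, hπc⟩
      · exact Or.inl ⟨c, hc, hca, hπc⟩
      · exact Or.inr ⟨c, hc, hca, hπc⟩
      · rcases hπc with hπc | hπc
        · exact Or.inl ⟨c₁, h₁, Set.subset_union_left.trans hca, hπc⟩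
        · exact Or.inr ⟨c₂, h₂, Set.subset_union_right.trans hca, hπc⟩

theorem satFire_of_satFull (h : satFull t a) : satFire t a :=
  ⟨h.1, fun _ hp => h.2 _ hp⟩

end Causes

section BranchUnion

variable {P : Type} {t : CITree P} {a c : Set (TPort P)}

def branchUnion (t : CITree P) (a : Set (TPort P)) : Set (TPort P) :=
  ⋃₀ {c ∈ sem t | c ⊆ a}

theorem branchUnion_subset : branchUnion t a ⊆ a :=
  Set.sUnion_subset fun _ hc => hc.2

theorem subset_branchUnion (hc : c ∈ sem t) (hca : c ⊆ a) : c ⊆ branchUnion t a :=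
  Set.subset_sUnion_of_mem ⟨hc, hca⟩

theorem satFull_branchUnion (h : cSatTT t a) : satFull t (branchUnion t a) := by
  obtain ⟨c, hc, hca⟩ := cSatTT_iff.1 h
  refine ⟨cSatTT_iff.2 ⟨c, hc, subset_branchUnion hc hca⟩, fun π hπ => ?_⟩
  obtain ⟨c, ⟨hc, hca⟩, hπc⟩ := Set.mem_sUnion.1 hπ
  exact (cSat_iff hπ).2 ⟨c, hc, subset_branchUnion hc hca, hπc⟩

theorem firesup_branchUnion (h : satFire t a) : firesup (branchUnion t a) = firesup a := by
  refine Set.Subset.antisymm (fun p hp => branchUnion_subset hp) fun p hp => ?_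
  obtain ⟨c, hc, hca, hpc⟩ := (cSat_iff hp).1 (h.2 p hp)
  exact subset_branchUnion hc hca hpc

end BranchUnion

/-- For every causal interaction tree `t`, the set of
interactions satisfying the reduced system `R̃(t)` and the set of interactions
satisfying the full system `R(t)` are `∼`-equivalent: they induce the same
composition on every finite family of behaviours. -/
theorem stmt12 {P : Type} (t : CITree P) :
    EquivInter P {a | satFire t a} {a | satFull t a} := by
  intro ι _ B _ _
  refine compTr_eq_of_forall_exists_subset (fun _ => satFire_of_satFull) (fun a ha => ?_) B
  exact ⟨branchUnion t a, satFull_branchUnion ha.1, branchUnion_subset, firesup_branchUnion ha⟩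
end

section
/- Let t be a causal interaction tree over act(P) ∪ fire(P) ∪ inhib(P), let a be an interaction satisfying the rule system R̃(t), and let π ∈ a be a typed port in act(P) ∪ inhib(P) such that the valuation of a violates the rule π ⇒ c_π(t) of R(t). Then the interaction a \ {π} also satisfies R̃(t), and firesup(a \ {π}) = firesup(a). -/
/-! Every cause `c_σ(t)` or `c_tt(t)` that holds in `a` is witnessed by conjuncts `b`
that hold in `a`, apart from `σ ∈ a` itself. Were `π` in such a `b`, the same conjunct
would make `c_π(t)` true; so `π` occurs in none of them and deleting it from `a` keeps
every such cause true. -/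

section RemoveViolatedPort

variable {P : Type} {t : CITree P} {π σ : TPort P} {a b : Set (TPort P)}

lemma notMem_of_not_cause (hb : b ⊆ a) (hviol : ¬ (π ∈ b ∧ b \ {π} ⊆ a)) : π ∉ b :=
  fun hπ => hviol ⟨hπ, Set.sdiff_subset.trans hb⟩

lemma subset_of_diff_singleton_subset (hσ : σ ∈ a) (hb : b \ {σ} ⊆ a) : b ⊆ a :=
  (Set.sdiff_singleton_subset_iff.mp hb).trans (Set.insert_subset hσ le_rfl)

lemma cSatTT_diff_singleton (hviol : ¬ cSat π t a) (h : cSatTT t a) :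
    cSatTT t (a \ {π}) := by
  induction t with
  | zero => exact h
  | node b => exact Set.subset_sdiff_singleton h (notMem_of_not_cause h hviol)
  | arrow b t => exact Set.subset_sdiff_singleton h (notMem_of_not_cause h (hviol ∘ .inl))
  | par t₁ t₂ ih₁ ih₂ =>
    simp only [cSat, not_or] at hviol
    exact h.imp (ih₁ hviol.1) (ih₂ hviol.2)

lemma cSat_diff_singleton (hσ : σ ∈ a) (hviol : ¬ cSat π t a) (h : cSat σ t a) :
    cSat σ t (a \ {π}) := by
  induction t with
  | zero => exact h
  | node b =>
    obtain ⟨hσb, hb⟩ := h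
    have hπb := notMem_of_not_cause (subset_of_diff_singleton_subset hσ hb) hviol
    exact ⟨hσb, Set.subset_sdiff_singleton hb fun hπ => hπb hπ.1⟩
  | arrow b t ih =>
    rcases h with ⟨hσb, hb⟩ | ⟨hσb, hb, ht⟩
    · have hπb := notMem_of_not_cause (subset_of_diff_singleton_subset hσ hb) (hviol ∘ .inl)
      exact .inl ⟨hσb, Set.subset_sdiff_singleton hb fun hπ => hπb hπ.1⟩
    · have hπb := notMem_of_not_cause hb (hviol ∘ .inl)
      exact .inr ⟨hσb, Set.subset_sdiff_singleton hb hπb,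
        ih (fun h => hviol (.inr ⟨hπb, hb, h⟩)) ht⟩
  | par t₁ t₂ ih₁ ih₂ =>
    simp only [cSat, not_or] at hviol
    exact h.imp (ih₁ hviol.1) (ih₂ hviol.2)

end RemoveViolatedPort

theorem stmt13_general {P : Type} (t : CITree P) (a : Set (TPort P)) (p : P)
    (π : TPort P) (hπ : π = TPort.act p ∨ π = TPort.inhib p)
    (hsat : satFire t a) (hviol : ¬ cSat π t a) :
    satFire t (a \ {π}) ∧ firesup (a \ {π}) = firesup a := by
  have hfire : ∀ q : P, TPort.fire q ≠ π := by
    rintro q rfl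
    rcases hπ with h | h <;> cases h
  refine ⟨⟨cSatTT_diff_singleton hviol hsat.1, fun q hq => ?_⟩, ?_⟩
  · exact cSat_diff_singleton hq.1 hviol (hsat.2 q hq.1)
  · ext q
    exact ⟨fun h => h.1, fun h => ⟨h, hfire q⟩⟩

/-- If `a` satisfies `R̃(t)` and `π ∈ a` is an activation or
negative typed port whose rule `π ⇒ c_π(t)` of `R(t)` is violated by `a`, then
`a \ {π}` still satisfies `R̃(t)`, and the firing support is unchanged. -/
theorem stmt13 {P : Type} (t : CITree P) (a : Set (TPort P)) (p : P)
    (π : TPort P) (hπ : π = TPort.act p ∨ π = TPort.inhib p) (hmem : π ∈ a)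
    (hsat : satFire t a) (hviol : ¬ cSat π t a) :
    satFire t (a \ {π}) ∧ firesup (a \ {π}) = firesup a :=
  stmt13_general t a p π hπ hsat hviol
end

section
/- Let B = (Q, P, →, ↑) be a behaviour with P finite, and let ≺ be a strict partial order on 2^P. Define the prioritised behaviour B_≺ = (Q, P, →_≺, ↑) by the offer-based priority rule: q →^a_≺ q' iff q →^a q' and for every a' with a ≺ a' there exists p ∈ a' with ¬(q ↑ p). Let γ_≺ be the extended interaction model consisting of all interactions fire(a) ∪ {inhib(f(a')) : a' with a ≺ a'}, where a ranges over the labels of B, fire(a) = {fire(p) : p ∈ a}, and f ranges over all choice functions selecting one port f(a') ∈ a' from each interaction a' of higher priority than a. Then the unary composition γ_≺(B) coincides with B_≺, i.e., they have the same transition relation and offer predicate. -/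
/-- Transition relation of the unary composition `γ(B)`. -/
def comp1 {P : Type} (B : Behaviour P) (γ : Set (Set (TPort P)))
    (q : B.State) (b : Set P) (q' : B.State) : Prop :=
  ∃ a ∈ γ, b = firesup a ∧ B.tr q (firesup a) q' ∧
    (∀ p ∈ actsup a, B.off q p) ∧ (∀ p ∈ negsup a, ¬ B.off q p)

/-- Transition relation of the prioritised behaviour `B_≺`, defined by the
offer-based priority rule. -/
def prioTr {P : Type} (B : Behaviour P) (lt : Set P → Set P → Prop)
    (q : B.State) (a : Set P) (q' : B.State) : Prop :=
  B.tr q a q' ∧ ∀ a', lt a a' → ∃ p ∈ a', ¬ B.off q p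

/-- The extended interaction model `γ_≺`: for every label `a` of `B` and every
choice function `f` selecting a port from each interaction of higher priority
than `a`, the interaction `fire(a) ∪ {inhib (f a') : a ≺ a'}`. -/
def gammaPrec {P : Type} (B : Behaviour P) (lt : Set P → Set P → Prop) :
    Set (Set (TPort P)) :=
  {c | ∃ a : Set P, (∃ q q', B.tr q a q') ∧
    ∃ f : ∀ a' : Set P, lt a a' → P,
      (∀ a' h, f a' h ∈ a') ∧
      c = (TPort.fire '' a) ∪ {π | ∃ a' h, π = TPort.inhib (f a' h)}}

/- A transition of `B` survives in `γ_≺(B)` exactly when some choice function picks, in every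
interaction of higher priority, a port that is not offered; such a choice exists precisely when
the offer-based priority rule lets the transition through. -/

section PrioInter

variable {P : Type} (lt : Set P → Set P → Prop)

def prioInter (a : Set P) (f : ∀ a', lt a a' → P) : Set (TPort P) :=
  TPort.fire '' a ∪ {π | ∃ a' h, π = TPort.inhib (f a' h)}

variable {lt} {a : Set P} {f : ∀ a', lt a a' → P}

@[simp]
theorem firesup_prioInter : firesup (prioInter lt a f) = a := by
  ext p
  simp [firesup, prioInter]

@[simp]
theorem actsup_prioInter : actsup (prioInter lt a f) = ∅ := by
  ext p
  simp [actsup, prioInter]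

theorem mem_negsup_prioInter {p : P} :
    p ∈ negsup (prioInter lt a f) ↔ ∃ a' h, p = f a' h := by
  simp [negsup, prioInter]

end PrioInter

section Unary

variable {P : Type} {B : Behaviour P} {lt : Set P → Set P → Prop} {q q' : B.State} {b : Set P}

theorem prioTr_of_comp1_gammaPrec (h : comp1 B (gammaPrec B lt) q b q') : prioTr B lt q b q' := by
  obtain ⟨c, ⟨a, -, f, hf, hc⟩, rfl, htr, -, hneg⟩ := h
  change c = prioInter lt a f at hc
  subst hc
  rw [firesup_prioInter] at htr ⊢
  exact ⟨htr, fun a' hlt => ⟨f a' hlt, hf a' hlt, hneg _ (mem_negsup_prioInter.2 ⟨a', hlt, rfl⟩)⟩⟩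

theorem comp1_gammaPrec_of_prioTr (h : prioTr B lt q b q') : comp1 B (gammaPrec B lt) q b q' := by
  obtain ⟨htr, hprio⟩ := h
  choose f hf hoff using hprio
  refine ⟨prioInter lt b f, ⟨b, ⟨q, q', htr⟩, f, hf, rfl⟩, firesup_prioInter.symm, ?_, ?_, ?_⟩
  · rwa [firesup_prioInter]
  · simp
  · intro p hp
    obtain ⟨a', hlt, rfl⟩ := mem_negsup_prioInter.1 hp
    exact hoff a' hlt

end Unary

theorem stmt15_general {P : Type} (B : Behaviour P)
    (lt : Set P → Set P → Prop) :
    ∀ q b q', comp1 B (gammaPrec B lt) q b q' ↔ prioTr B lt q b q' :=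
  fun _ _ _ => ⟨prioTr_of_comp1_gammaPrec, comp1_gammaPrec_of_prioTr⟩

/-- For a behaviour `B` over a finite port set and a strict
partial order `≺` on interactions, the unary composition `γ_≺(B)` coincides
with the prioritised behaviour `B_≺` (their transition relations are equal;
the offer predicates are both those of `B`). -/
theorem stmt15 {P : Type} [Finite P] (B : Behaviour P)
    (lt : Set P → Set P → Prop)
    (hirr : ∀ a, ¬ lt a a)
    (htrans : ∀ a b c, lt a b → lt b c → lt a c) :
    ∀ q b q', comp1 B (gammaPrec B lt) q b q' ↔ prioTr B lt q b q' :=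
  stmt15_general B lt
end
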